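/- arXiv:math/0701580 — 2 statements merged into one kernel-verified Lean document; each statement's English description precedes it below -/
import Mathlib

section
/- Let E be a real normed space, (Ω, ℱ, ℙ) a probability space, 𝒵 a nonempty convex subset of a real vector space, T : E → E a continuous linear map, and for each z ∈ 𝒵 let ζ_z : Ω → E be a strongly measurable map and c(z) a real number, such that ω ↦ φ(T x + ζ_z(ω)) is ℙ-integrable for every x ∈ E and z ∈ 𝒵. Assume: (i) the map z ↦ ζ_z is affine, i.e. for all z, z' ∈ 𝒵 and λ ∈ [0,1], ζ_{λz+(1−λ)z'}(ω) = λ ζ_z(ω) + (1−λ) ζ_{z'}(ω) for ℙ-a.e. ω; (ii) c : 𝒵 → ℝ is concave; (iii) φ : E → ℝ is concave. Then the value function V : E → ℝ ∪ {+∞} defined by V(x) = sup_{z ∈ 𝒵} ( 𝔼[φ(T x + ζ_z)] + c(z) ) is concave: for all x, y ∈ E and λ ∈ [0,1], λ V(x) + (1−λ) V(y) ≤ V(λ x + (1−λ) y) in the extended reals. -/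
open MeasureTheory Set

/-- If `a' < l * s` where `s = ⨆ z ∈ 𝒵, g z` over a nonempty set and `0 ≤ l`,
then there is `z ∈ 𝒵` with `a' ≤ l * g z`. -/
lemma exists_le_mul_of_lt_mul_biSup {Z : Type*} {𝒵 : Set Z} (h𝒵ne : 𝒵.Nonempty)
    (g : Z → ℝ) {l : ℝ} (hl : 0 ≤ l) {a' : EReal}
    (ha' : a' < (l : EReal) * ⨆ z ∈ 𝒵, ((g z : ℝ) : EReal)) :
    ∃ z ∈ 𝒵, a' ≤ (l : EReal) * ((g z : ℝ) : EReal) := by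
  rcases eq_or_lt_of_le hl with h0 | h0
  · obtain ⟨z0, hz0⟩ := h𝒵ne
    refine ⟨z0, hz0, ?_⟩
    rw [← h0] at ha' ⊢
    simpa using ha'.le
  · have hlne0 : ((l : EReal)) ≠ 0 := by
      simp only [ne_eq, EReal.coe_eq_zero]; exact ne_of_gt h0
    have hlnb : ((l : EReal)) ≠ ⊥ := EReal.coe_ne_bot l
    have hlnt : ((l : EReal)) ≠ ⊤ := EReal.coe_ne_top l
    have hlpos : (0 : EReal) < (l : EReal) := by exact_mod_cast h0
    have hdiv : a' / (l : EReal) < ⨆ z ∈ 𝒵, ((g z : ℝ) : EReal) := by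
      by_contra h
      push_neg at h
      have := mul_le_mul_of_nonneg_left h hlpos.le
      rw [EReal.mul_div_cancel hlnb hlnt hlne0] at this
      exact absurd (lt_of_lt_of_le ha' this) (lt_irrefl _)
    rw [lt_iSup_iff] at hdiv
    obtain ⟨z, hz⟩ := hdiv
    rw [lt_iSup_iff] at hz
    obtain ⟨hz𝒵, hz⟩ := hz
    refine ⟨z, hz𝒵, ?_⟩
    rw [← EReal.div_le_iff_le_mul hlpos hlnt]
    exact hz.le

/-- Concavity of the value function for a stochastic control problem with linear
dynamics: the terminal state has the form `T x + ζ z`, `z ↦ ζ z` is affine (a.e.),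
the running reward `c` is concave on the convex control set `𝒵`, and the terminal
reward `φ` is concave. Then `V x = sup_{z ∈ 𝒵} (𝔼[φ (T x + ζ z)] + c z)` is concave. -/
theorem value_function_concave
    {E : Type*} [NormedAddCommGroup E] [NormedSpace ℝ E]
    {Z : Type*} [AddCommGroup Z] [Module ℝ Z]
    {Ω : Type*} [MeasurableSpace Ω] (ℙ : Measure Ω) [IsProbabilityMeasure ℙ]
    (𝒵 : Set Z) (h𝒵ne : 𝒵.Nonempty) (h𝒵conv : Convex ℝ 𝒵)
    (T : E →L[ℝ] E) (ζ : Z → Ω → E) (c : Z → ℝ) (φ : E → ℝ)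
    (hζmeas : ∀ z ∈ 𝒵, StronglyMeasurable (ζ z))
    (hint : ∀ x : E, ∀ z ∈ 𝒵, Integrable (fun ω => φ (T x + ζ z ω)) ℙ)
    (hζaff : ∀ z ∈ 𝒵, ∀ z' ∈ 𝒵, ∀ l : ℝ, l ∈ Icc (0:ℝ) 1 →
      ∀ᵐ ω ∂ℙ, ζ (l • z + (1 - l) • z') ω = l • ζ z ω + (1 - l) • ζ z' ω)
    (hc : ConcaveOn ℝ 𝒵 c)
    (hφ : ConcaveOn ℝ univ φ)
    (V : E → EReal)
    (hV : ∀ x : E, V x = ⨆ z ∈ 𝒵, (((∫ ω, φ (T x + ζ z ω) ∂ℙ) + c z : ℝ) : EReal)) :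
    ∀ x y : E, ∀ l : ℝ, l ∈ Icc (0:ℝ) 1 →
      (l : EReal) * V x + ((1 - l : ℝ) : EReal) * V y ≤ V (l • x + (1 - l) • y) := by
  intro x y l hl
  obtain ⟨hl0, hl1⟩ := hl
  have hl0' : (0:ℝ) ≤ 1 - l := by linarith
  -- Key real inequality for fixed controls
  have key : ∀ z ∈ 𝒵, ∀ z' ∈ 𝒵,
      l * ((∫ ω, φ (T x + ζ z ω) ∂ℙ) + c z)
        + (1 - l) * ((∫ ω, φ (T y + ζ z' ω) ∂ℙ) + c z')
      ≤ (∫ ω, φ (T (l • x + (1 - l) • y) + ζ (l • z + (1 - l) • z') ω) ∂ℙ)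
          + c (l • z + (1 - l) • z') := by
    intro z hz z' hz'
    set w := l • z + (1 - l) • z' with hw
    have hw𝒵 : w ∈ 𝒵 := h𝒵conv hz hz' hl0 hl0' (by ring)
    have hcw : l * c z + (1 - l) * c z' ≤ c w := by
      have := hc.2 hz hz' hl0 hl0' (by ring)
      simpa [smul_eq_mul] using this
    have hae := hζaff z hz z' hz' l ⟨hl0, hl1⟩
    have hbound : ∀ᵐ ω ∂ℙ,
        l * φ (T x + ζ z ω) + (1 - l) * φ (T y + ζ z' ω)
          ≤ φ (T (l • x + (1 - l) • y) + ζ w ω) := by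
      filter_upwards [hae] with ω hω
      have harg : T (l • x + (1 - l) • y) + ζ w ω
          = l • (T x + ζ z ω) + (1 - l) • (T y + ζ z' ω) := by
        rw [hω]
        simp only [map_add, ContinuousLinearMap.map_smul, smul_add]
        abel
      rw [harg]
      have := hφ.2 (mem_univ (T x + ζ z ω)) (mem_univ (T y + ζ z' ω)) hl0 hl0' (by ring)
      simpa [smul_eq_mul] using this
    have hint1 : Integrable (fun ω => l * φ (T x + ζ z ω)
        + (1 - l) * φ (T y + ζ z' ω)) ℙ :=
      ((hint x z hz).const_mul l).add ((hint y z' hz').const_mul (1 - l))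
    have hmono := integral_mono_ae hint1 (hint (l • x + (1 - l) • y) w hw𝒵) hbound
    have hintegral : l * (∫ ω, φ (T x + ζ z ω) ∂ℙ) + (1 - l) * (∫ ω, φ (T y + ζ z' ω) ∂ℙ)
        ≤ ∫ ω, φ (T (l • x + (1 - l) • y) + ζ w ω) ∂ℙ := by
      rw [← integral_const_mul, ← integral_const_mul,
        ← integral_add ((hint x z hz).const_mul l) ((hint y z' hz').const_mul (1 - l))]
      exact hmono
    calc l * ((∫ ω, φ (T x + ζ z ω) ∂ℙ) + c z)
          + (1 - l) * ((∫ ω, φ (T y + ζ z' ω) ∂ℙ) + c z')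
        = (l * (∫ ω, φ (T x + ζ z ω) ∂ℙ) + (1 - l) * (∫ ω, φ (T y + ζ z' ω) ∂ℙ))
            + (l * c z + (1 - l) * c z') := by ring
      _ ≤ (∫ ω, φ (T (l • x + (1 - l) • y) + ζ w ω) ∂ℙ) + c w :=
          add_le_add hintegral hcw
  -- Pass to the EReal suprema
  apply EReal.add_le_of_forall_lt
  intro a' ha' b' hb'
  rw [hV x] at ha'
  rw [hV y] at hb'
  obtain ⟨z, hz, haz⟩ := exists_le_mul_of_lt_mul_biSup h𝒵ne
    (fun z => (∫ ω, φ (T x + ζ z ω) ∂ℙ) + c z) hl0 ha'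
  obtain ⟨z', hz', hbz⟩ := exists_le_mul_of_lt_mul_biSup h𝒵ne
    (fun z' => (∫ ω, φ (T y + ζ z' ω) ∂ℙ) + c z') hl0' hb'
  have hw𝒵 : l • z + (1 - l) • z' ∈ 𝒵 := h𝒵conv hz hz' hl0 hl0' (by ring)
  calc a' + b'
      ≤ (l : EReal) * (((∫ ω, φ (T x + ζ z ω) ∂ℙ) + c z : ℝ) : EReal)
        + ((1 - l : ℝ) : EReal) * (((∫ ω, φ (T y + ζ z' ω) ∂ℙ) + c z' : ℝ) : EReal) :=
        add_le_add haz hbz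
    _ = ((l * ((∫ ω, φ (T x + ζ z ω) ∂ℙ) + c z)
        + (1 - l) * ((∫ ω, φ (T y + ζ z' ω) ∂ℙ) + c z') : ℝ) : EReal) := by
        push_cast
        ring
    _ ≤ (((∫ ω, φ (T (l • x + (1 - l) • y) + ζ (l • z + (1 - l) • z') ω) ∂ℙ)
        + c (l • z + (1 - l) • z') : ℝ) : EReal) := by
        exact_mod_cast key z hz z' hz'
    _ ≤ V (l • x + (1 - l) • y) := by
        rw [hV (l • x + (1 - l) • y)]
        exact le_biSup
          (fun w => (((∫ ω, φ (T (l • x + (1 - l) • y) + ζ w ω) ∂ℙ) + c w : ℝ) : EReal)) hw𝒵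
end

section
/- Let r > 0, T > 0, a₀ ∈ ℝ, and let a₁ ∈ L²([−r,0],ℝ) satisfy a₁(ξ) ≥ 0 for a.e. ξ ∈ [−r,0]. Let u : [−r, T] → ℝ be continuous with u(ξ) ≥ 0 for all ξ ∈ [−r, 0], and suppose that for all t ∈ [0, T], u(t) = u(0) + ∫₀ᵗ ( a₀ u(s) + ∫_{−r}^0 a₁(ξ) u(s+ξ) dξ ) ds. Then u(t) ≥ 0 for all t ∈ [0, T]. -/
open Set MeasureTheory intervalIntegral

/-!
Weight the solution exponentially: for `K > max 0 (a₀ + ∫ a₁)` let `v t = exp (-K t) u t`. If `u`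
became negative, `v` would attain a negative minimum on `[0, T]` at some `t₀ > 0`. There
`u (t₀ + ξ) ≥ u t₀` for `ξ ∈ [-r, 0]` (on `[t₀ - r, 0]` by the nonnegative history, on
`[0, t₀]` by minimality and `K ≥ 0`), so the nonnegative kernel gives
`u' t₀ ≥ (a₀ + ∫ a₁) u t₀ > K u t₀`, i.e. `v' t₀ > 0`, contradicting minimality from the left.
-/

theorem hasDerivWithinAt_nonpos_of_isMinOn_Icc {v : ℝ → ℝ} {v' a b : ℝ} (hab : a < b)
    (hmin : IsMinOn v (Icc a b) b) (hv : HasDerivWithinAt v v' (Icc a b) b) : v' ≤ 0 := by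
  have hcone : a - b ∈ posTangentConeAt (Icc a b) b :=
    sub_mem_posTangentConeAt_of_segment_subset (by rw [segment_symm, segment_eq_Icc hab.le])
  have := hmin.localize.hasFDerivWithinAt_nonneg hv.hasFDerivWithinAt hcone
  simp only [ContinuousLinearMap.toSpanSingleton_apply, smul_eq_mul] at this
  nlinarith

theorem nonneg_of_hasDerivWithinAt_gt {u u' : ℝ → ℝ} {T K : ℝ} (hK : 0 ≤ K)
    (hu : ContinuousOn u (Icc 0 T)) (hu₀ : 0 ≤ u 0)
    (hderiv : ∀ t ∈ Ioc 0 T, HasDerivWithinAt u (u' t) (Icc 0 t) t)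
    (hgrowth : ∀ t ∈ Ioc 0 T, u t < 0 → (∀ s ∈ Icc 0 t, u t ≤ u s) → K * u t < u' t) :
    ∀ t ∈ Icc 0 T, 0 ≤ u t := by
  intro t₁ ht₁
  by_contra! hneg
  set v : ℝ → ℝ := fun t => Real.exp (-K * t) * u t with hv
  have hv_cont : ContinuousOn v (Icc 0 T) :=
    (by fun_prop : Continuous fun t : ℝ => Real.exp (-K * t)).continuousOn.mul hu
  obtain ⟨t₀, ht₀, hmin⟩ := isCompact_Icc.exists_isMinOn ⟨t₁, ht₁⟩ hv_cont
  have hut₀ : u t₀ < 0 := by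
    have : v t₀ < 0 := (hmin ht₁).trans_lt (mul_neg_of_pos_of_neg (Real.exp_pos _) hneg)
    exact neg_of_mul_neg_right this (Real.exp_pos _).le
  have ht₀pos : 0 < t₀ := ht₀.1.lt_of_ne (by rintro rfl; linarith)
  have hhist : ∀ s ∈ Icc 0 t₀, u t₀ ≤ u s := by
    intro s hs
    have hvs : v t₀ ≤ v s := hmin ⟨hs.1, hs.2.trans ht₀.2⟩
    have hexp : Real.exp (-K * t₀) ≤ Real.exp (-K * s) :=
      Real.exp_le_exp.mpr (by nlinarith [hs.2])
    simp only [hv] at hvs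
    nlinarith [Real.exp_pos (-K * t₀)]
  have hv' : HasDerivWithinAt v (Real.exp (-K * t₀) * (u' t₀ - K * u t₀)) (Icc 0 t₀) t₀ := by
    have hexp : HasDerivAt (fun t : ℝ => Real.exp (-K * t)) (Real.exp (-K * t₀) * -K) t₀ := by
      simpa using ((hasDerivAt_id t₀).const_mul (-K)).exp
    exact (hexp.hasDerivWithinAt.mul (hderiv t₀ ⟨ht₀pos, ht₀.2⟩)).congr_deriv (by ring)
  have hle := hasDerivWithinAt_nonpos_of_isMinOn_Icc ht₀pos
    (hmin.on_subset (Icc_subset_Icc_right ht₀.2)) hv'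
  have hlt := hgrowth t₀ ⟨ht₀pos, ht₀.2⟩ hut₀ hhist
  nlinarith [Real.exp_pos (-K * t₀)]

theorem ContinuousOn.hasDerivWithinAt_of_eq_add_integral {u f : ℝ → ℝ} {a b t : ℝ}
    (hf : ContinuousOn f (Icc a b)) (h_eq : ∀ t ∈ Icc a b, u t = u a + ∫ s in a..t, f s)
    (ht : t ∈ Icc a b) : HasDerivWithinAt u (f t) (Icc a b) t := by
  have : Fact (t ∈ Icc a b) := ⟨ht⟩
  have hF := integral_hasDerivWithinAt_right (s := Icc a b)
    ((hf.mono (Icc_subset_Icc_right ht.2)).intervalIntegrable_of_Icc ht.1)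
    (hf.stronglyMeasurableAtFilter_nhdsWithin measurableSet_Icc t) (hf t ht)
  exact (hF.const_add (u a)).congr h_eq (h_eq t ht)

theorem integral_mul_le_integral_mul_of_le {α : Type*} [MeasurableSpace α] {μ : Measure α}
    {a g : α → ℝ} {c : ℝ} (ha : Integrable a μ) (ha_nonneg : ∀ᵐ x ∂μ, 0 ≤ a x)
    (hag : Integrable (fun x => a x * g x) μ) (hc : ∀ᵐ x ∂μ, c ≤ g x) :
    (∫ x, a x ∂μ) * c ≤ ∫ x, a x * g x ∂μ := by
  rw [← MeasureTheory.integral_mul_const]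
  refine integral_mono_ae (ha.mul_const c) hag ?_
  filter_upwards [ha_nonneg, hc] with x hax hcx
  exact mul_le_mul_of_nonneg_left hcx hax

section DelayTerm

variable {a u : ℝ → ℝ} {r T : ℝ}

theorem add_mem_Icc_of_mem_Icc {s ξ : ℝ} (hs : s ∈ Icc 0 T) (hξ : ξ ∈ Icc (-r) 0) :
    s + ξ ∈ Icc (-r) T :=
  ⟨by linarith [hs.1, hξ.1], by linarith [hs.2, hξ.2]⟩

theorem integrableOn_mul_comp_add (ha : IntegrableOn a (Icc (-r) 0))
    (hu : ContinuousOn u (Icc (-r) T)) {s : ℝ} (hs : s ∈ Icc 0 T) :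
    IntegrableOn (fun ξ => a ξ * u (s + ξ)) (Icc (-r) 0) :=
  ha.mul_continuousOn
    (hu.comp (continuousOn_const.add continuousOn_id) fun _ hξ => add_mem_Icc_of_mem_Icc hs hξ)
    isCompact_Icc

theorem continuousOn_integral_mul_comp_add (ha : IntegrableOn a (Icc (-r) 0))
    (hu : ContinuousOn u (Icc (-r) T)) :
    ContinuousOn (fun s => ∫ ξ in Icc (-r) 0, a ξ * u (s + ξ)) (Icc 0 T) := by
  obtain ⟨M, hM⟩ := isCompact_Icc.exists_bound_of_continuousOn hu
  refine continuousOn_of_dominated (bound := fun ξ => ‖a ξ‖ * M)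
    (fun s hs => (integrableOn_mul_comp_add ha hu hs).aestronglyMeasurable) ?_
    (ha.norm.mul_const M) ?_
  · intro s hs
    filter_upwards [ae_restrict_mem measurableSet_Icc] with ξ hξ
    rw [norm_mul]
    exact mul_le_mul_of_nonneg_left (hM _ (add_mem_Icc_of_mem_Icc hs hξ)) (norm_nonneg _)
  · filter_upwards [ae_restrict_mem measurableSet_Icc] with ξ hξ
    exact continuousOn_const.mul
      (hu.comp (continuousOn_id.add continuousOn_const) fun _ hs => add_mem_Icc_of_mem_Icc hs hξ)

end DelayTerm

theorem delay_equation_positivity_general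
    (r T a₀ : ℝ) (hr : 0 < r)
    (a₁ : ℝ → ℝ)
    (ha₁L2 : MemLp a₁ 2 ((volume : Measure ℝ).restrict (Icc (-r) 0)))
    (ha₁pos : ∀ᵐ ξ ∂((volume : Measure ℝ).restrict (Icc (-r) 0)), 0 ≤ a₁ ξ)
    (u : ℝ → ℝ)
    (hu_cont : ContinuousOn u (Icc (-r) T))
    (hu_init : ∀ ξ ∈ Icc (-r) (0:ℝ), 0 ≤ u ξ)
    (h_eq : ∀ t ∈ Icc (0:ℝ) T,
      u t = u 0 + ∫ s in (0:ℝ)..t,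
        (a₀ * u s + ∫ ξ in Icc (-r) (0:ℝ), a₁ ξ * u (s + ξ))) :
    ∀ t ∈ Icc (0:ℝ) T, 0 ≤ u t := by
  have ha₁ : IntegrableOn a₁ (Icc (-r) 0) := ha₁L2.integrable one_le_two
  have hA₁ : 0 ≤ ∫ ξ in Icc (-r) 0, a₁ ξ := integral_nonneg_of_ae ha₁pos
  have hu : ContinuousOn u (Icc 0 T) := hu_cont.mono (Icc_subset_Icc_left (by linarith))
  have hf : ContinuousOn (fun s => a₀ * u s + ∫ ξ in Icc (-r) 0, a₁ ξ * u (s + ξ)) (Icc 0 T) :=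
    (continuousOn_const.mul hu).add (continuousOn_integral_mul_comp_add ha₁ hu_cont)
  refine nonneg_of_hasDerivWithinAt_gt (K := |a₀| + (∫ ξ in Icc (-r) 0, a₁ ξ) + 1)
    (by linarith [abs_nonneg a₀]) hu (hu_init 0 ⟨by linarith, le_rfl⟩)
    (fun t ht => (hf.hasDerivWithinAt_of_eq_add_integral h_eq (Ioc_subset_Icc_self ht)).mono
      (Icc_subset_Icc_right ht.2)) ?_
  intro t ht hneg hhist
  have hdelay : ∀ ξ ∈ Icc (-r) 0, u t ≤ u (t + ξ) := by
    intro ξ hξ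
    rcases le_total 0 (t + ξ) with h | h
    · exact hhist _ ⟨h, by linarith [hξ.2]⟩
    · exact hneg.le.trans (hu_init _ ⟨by linarith [hξ.1, ht.1], h⟩)
  have hkernel := integral_mul_le_integral_mul_of_le ha₁ ha₁pos
    (integrableOn_mul_comp_add ha₁ hu_cont (Ioc_subset_Icc_self ht))
    (ae_restrict_of_forall_mem measurableSet_Icc hdelay)
  linarith [mul_le_mul_of_nonpos_right (le_abs_self a₀) hneg.le]

/-- Positivity preservation for the linear delay equation
`du/dt = a₀ u(t) + ∫_{−r}^0 a₁(ξ) u(t+ξ) dξ`: if the kernel `a₁ ∈ L²([−r,0])` is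
nonnegative a.e. and the initial history is nonnegative, then the solution stays
nonnegative on `[0, T]`. -/
theorem delay_equation_positivity
    (r T a₀ : ℝ) (hr : 0 < r) (hT : 0 < T)
    (a₁ : ℝ → ℝ)
    (ha₁L2 : MemLp a₁ 2 ((volume : Measure ℝ).restrict (Icc (-r) 0)))
    (ha₁pos : ∀ᵐ ξ ∂((volume : Measure ℝ).restrict (Icc (-r) 0)), 0 ≤ a₁ ξ)
    (u : ℝ → ℝ)
    (hu_cont : ContinuousOn u (Icc (-r) T))
    (hu_init : ∀ ξ ∈ Icc (-r) (0:ℝ), 0 ≤ u ξ)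
    (h_int : ∀ t ∈ Icc (0:ℝ) T,
      IntervalIntegrable
        (fun s => a₀ * u s + ∫ ξ in Icc (-r) (0:ℝ), a₁ ξ * u (s + ξ)) volume 0 t)
    (h_inner_int : ∀ s ∈ Icc (0:ℝ) T,
      IntegrableOn (fun ξ => a₁ ξ * u (s + ξ)) (Icc (-r) 0) volume)
    (h_eq : ∀ t ∈ Icc (0:ℝ) T,
      u t = u 0 + ∫ s in (0:ℝ)..t,
        (a₀ * u s + ∫ ξ in Icc (-r) (0:ℝ), a₁ ξ * u (s + ξ))) :
    ∀ t ∈ Icc (0:ℝ) T, 0 ≤ u t :=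
  delay_equation_positivity_general r T a₀ hr a₁ ha₁L2 ha₁pos u hu_cont hu_init h_eq
end
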